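/- arXiv:2604.02303 — 5 statements merged into one kernel-verified Lean document; each statement's English description precedes it below -/
import Mathlib

section
/- Let Γ be a directed graph on vertex set 𝔹^n. Then there exists a Boolean network f of dimension n with Γ = GA(f) if and only if Γ is reflexive and the out-neighbourhood of every vertex is a subcube of 𝔹^n. -/
/-!  Common definitions: Boolean networks on `Fin n → Bool`. -/

/-- The update `f^{(S)}` of the coordinates in `S` according to `f`. -/
def upd {n : ℕ} (f : (Fin n → Bool) → Fin n → Bool) (S : Finset (Fin n)) :
    (Fin n → Bool) → Fin n → Bool :=
  fun x i => if i ∈ S then f x i else x i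

/-- `f^{(S,T)} = f^{(T)} ∘ f^{(S)}`. -/
def upd2 {n : ℕ} (f : (Fin n → Bool) → Fin n → Bool) (S T : Finset (Fin n)) :
    (Fin n → Bool) → Fin n → Bool :=
  upd f T ∘ upd f S

/-- `Δ(x,y)`, the set of coordinates where `x` and `y` differ. -/
def delta {n : ℕ} (x y : Fin n → Bool) : Set (Fin n) := {i | x i ≠ y i}

/-- Hamming distance. -/
noncomputable def hdist {n : ℕ} (x y : Fin n → Bool) : ℕ := (delta x y).ncard

/-- The interval (subcube) `[x,y]`. -/
def interval {n : ℕ} (x y : Fin n → Bool) : Set (Fin n → Bool) :=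
  {z | delta x z ⊆ delta x y}

/-- A subcube of `𝔹^n`: fix the coordinates in `S` to `0` and those in `T` to `1`. -/
def IsSubcube {n : ℕ} (X : Set (Fin n → Bool)) : Prop :=
  ∃ S T : Set (Fin n), Disjoint S T ∧
    X = {x | (∀ i ∈ S, x i = false) ∧ (∀ i ∈ T, x i = true)}

/-- The partial order `f ⊑ g` on Boolean networks. -/
def BNle {n : ℕ} (f g : (Fin n → Bool) → Fin n → Bool) : Prop :=
  ∀ x, delta x (f x) ⊆ delta x (g x)

/-- A trapspace of `f`: an invariant subcube. -/
def IsTrapspace {n : ℕ} (f : (Fin n → Bool) → Fin n → Bool)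
    (X : Set (Fin n → Bool)) : Prop :=
  IsSubcube X ∧ ∀ x ∈ X, f x ∈ X

/-- The collection of all trapspaces of `f`. -/
def trapspaces {n : ℕ} (f : (Fin n → Bool) → Fin n → Bool) :
    Set (Set (Fin n → Bool)) :=
  {X | IsTrapspace f X}

/-- The principal trapspace `T_f(x)`: the smallest trapspace of `f` containing `x`. -/
def Tprin {n : ℕ} (f : (Fin n → Bool) → Fin n → Bool) (x : Fin n → Bool) :
    Set (Fin n → Bool) :=
  ⋂₀ {X | IsTrapspace f X ∧ x ∈ X}

/-- The collection of principal trapspaces of `f`. -/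
def PT {n : ℕ} (f : (Fin n → Bool) → Fin n → Bool) : Set (Set (Fin n → Bool)) :=
  {X | ∃ x, X = Tprin f x}

-- The opposite of `x` in a subcube `X` containing `x`: the coordinate `i` is flipped
-- iff some element of `X` differs from `x` there; so `[x, opp X x] = X` when `X` is a
-- subcube containing `x`.
open scoped Classical in
noncomputable def opp {n : ℕ} (X : Set (Fin n → Bool)) (x : Fin n → Bool) :
    Fin n → Bool :=
  fun i => if ∃ y ∈ X, y i ≠ x i then !(x i) else x i

/-- The trapping closure `f^T`, characterised by `[x, f^T(x)] = T_f(x)`. -/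
noncomputable def trapClosure {n : ℕ} (f : (Fin n → Bool) → Fin n → Bool) :
    (Fin n → Bool) → Fin n → Bool :=
  fun x => opp (Tprin f x) x

/-- The general asynchronous graph of `f`, as a relation on `𝔹^n`. -/
def GA {n : ℕ} (f : (Fin n → Bool) → Fin n → Bool) :
    (Fin n → Bool) → (Fin n → Bool) → Prop :=
  fun x y => ∃ S : Finset (Fin n), y = upd f S x

/-- The asynchronous graph of `f`, as a relation on `𝔹^n`. -/
def Agraph {n : ℕ} (f : (Fin n → Bool) → Fin n → Bool) :
    (Fin n → Bool) → (Fin n → Bool) → Prop :=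
  fun x y => ∃ i : Fin n, y = upd f {i} x

/-- The trapping graph of `f`: an edge `(x,y)` iff `y ∈ T_f(x)`. -/
def TG {n : ℕ} (f : (Fin n → Bool) → Fin n → Bool) :
    (Fin n → Bool) → (Fin n → Bool) → Prop :=
  fun x y => y ∈ Tprin f x

/-- A network is trapping if its general asynchronous graph is transitive. -/
def IsTrapping {n : ℕ} (f : (Fin n → Bool) → Fin n → Bool) : Prop :=
  Transitive (GA f)

/-- A commutative Boolean network: `f^{(i,j)} = f^{(j,i)}` for all `i,j`. -/
def IsCommutative' {n : ℕ} (f : (Fin n → Bool) → Fin n → Bool) : Prop :=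
  ∀ i j : Fin n, upd2 f {i} {j} = upd2 f {j} {i}

/-- `𝒜(x)`: the intersection of all members of `𝒜` containing `x`
(`= 𝔹^n` if no member contains `x`, since `⋂₀ ∅ = univ`). -/
def collAt {n : ℕ} (𝒜 : Set (Set (Fin n → Bool))) (x : Fin n → Bool) :
    Set (Fin n → Bool) :=
  ⋂₀ {A ∈ 𝒜 | x ∈ A}

/-- The network `F(𝒜)`, characterised by `[x, F(𝒜)(x)] = 𝒜(x)`. -/
noncomputable def Fnet {n : ℕ} (𝒜 : Set (Set (Fin n → Bool))) :
    (Fin n → Bool) → Fin n → Bool :=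
  fun x => opp (collAt 𝒜 x) x

/-- A collection of subcubes is pre-principal if `𝒬 = {𝒬(x) : x ∈ 𝔹^n}`. -/
def PrePrincipal {n : ℕ} (𝒬 : Set (Set (Fin n → Bool))) : Prop :=
  𝒬 = {X | ∃ x, X = collAt 𝒬 x}

/-- `λ(𝒜)`: unions of subcollections of `𝒜` that are subcubes. -/
def lamColl {n : ℕ} (𝒜 : Set (Set (Fin n → Bool))) : Set (Set (Fin n → Bool)) :=
  {X | ∃ ℛ ⊆ 𝒜, X = ⋃₀ ℛ ∧ IsSubcube X}

/-- `μ(𝒜) = {𝒜(x) : x ∈ 𝔹^n}`. -/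
def muColl {n : ℕ} (𝒜 : Set (Set (Fin n → Bool))) : Set (Set (Fin n → Bool)) :=
  {X | ∃ x, X = collAt 𝒜 x}

/-- A pre-ideal collection of subcubes. -/
def PreIdeal {n : ℕ} (𝒥 : Set (Set (Fin n → Bool))) : Prop :=
  Set.univ ∈ 𝒥 ∧
  (∀ A ∈ 𝒥, ∀ B ∈ 𝒥, (A ∩ B).Nonempty → A ∩ B ∈ 𝒥) ∧
  (∀ ℛ ⊆ 𝒥, IsSubcube (⋃₀ ℛ) → ⋃₀ ℛ ∈ 𝒥)

/-- The collection of minimal trapspaces of `f`. -/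
def MT {n : ℕ} (f : (Fin n → Bool) → Fin n → Bool) : Set (Set (Fin n → Bool)) :=
  {X | IsTrapspace f X ∧ ∀ Y, IsTrapspace f Y → ¬ Y ⊂ X}

/-- `M(f)`: the union of the minimal trapspaces of `f`. -/
def Mset {n : ℕ} (f : (Fin n → Bool) → Fin n → Bool) : Set (Fin n → Bool) :=
  ⋃₀ MT f

-- The min-trapping extension `f^M`: `[x, f^M(x)] = T_f(x)` if `x ∈ M(f)`,
-- and `f^M(x) = ¬x` otherwise.
open scoped Classical in
noncomputable def minExt {n : ℕ} (f : (Fin n → Bool) → Fin n → Bool) :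
    (Fin n → Bool) → Fin n → Bool :=
  fun x => if x ∈ Mset f then opp (Tprin f x) x else fun i => !(x i)

/-! The out-neighbourhood of `x` in `GA f` is the interval `[x, f x]`, and every subcube `X`
containing `x` is the interval `[x, opp X x]`; so a network realising `Γ` is read off
the out-neighbourhoods as `f x = opp {y | Γ x y} x`. -/

section

variable {n : ℕ}

lemma mem_interval_iff {x y z : Fin n → Bool} :
    z ∈ interval x y ↔ ∀ i, z i = x i ∨ z i = y i :=
  forall_congr' fun i => by
    simp only [delta, Set.mem_ofPred_eq]
    cases x i <;> cases y i <;> cases z i <;> decide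

lemma isSubcube_interval (x y : Fin n → Bool) : IsSubcube (interval x y) := by
  refine ⟨{i | x i = false ∧ y i = false}, {i | x i = true ∧ y i = true}, ?_, ?_⟩
  · exact Set.disjoint_left.2 fun i hS hT => by simp_all
  · ext z
    simp only [mem_interval_iff, Set.mem_ofPred_eq, ← forall_and]
    exact forall_congr' fun i => by cases x i <;> cases y i <;> cases z i <;> decide

lemma IsSubcube.mem_iff {X : Set (Fin n → Bool)} (hX : IsSubcube X) {x y : Fin n → Bool}
    (hx : x ∈ X) : y ∈ X ↔ ∀ i, y i = x i ∨ ∃ z ∈ X, z i ≠ x i := by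
  obtain ⟨S, T, -, rfl⟩ := hX
  refine ⟨fun _ i => (em (y i = x i)).imp_right fun h => ⟨y, ‹_›, h⟩, fun hy => ⟨?_, ?_⟩⟩
  · intro i hi
    rcases hy i with h | ⟨z, hz, hzx⟩
    · exact h.trans (hx.1 i hi)
    · exact absurd ((hz.1 i hi).trans (hx.1 i hi).symm) hzx
  · intro i hi
    rcases hy i with h | ⟨z, hz, hzx⟩
    · exact h.trans (hx.2 i hi)
    · exact absurd ((hz.2 i hi).trans (hx.2 i hi).symm) hzx

lemma IsSubcube.eq_interval_opp {X : Set (Fin n → Bool)} (hX : IsSubcube X)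
    {x : Fin n → Bool} (hx : x ∈ X) : X = interval x (opp X x) := by
  ext y
  rw [hX.mem_iff hx, mem_interval_iff]
  refine forall_congr' fun i => ?_
  by_cases h : ∃ z ∈ X, z i ≠ x i
  · simp only [opp, h, if_true]
    cases x i <;> cases y i <;> decide
  · simp [opp, h]

lemma GA_iff_mem_interval (f : (Fin n → Bool) → Fin n → Bool) (x y : Fin n → Bool) :
    GA f x y ↔ y ∈ interval x (f x) := by
  classical
  rw [mem_interval_iff]
  constructor
  · rintro ⟨S, rfl⟩ i
    by_cases hi : i ∈ S <;> simp [upd, hi]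
  · intro h
    refine ⟨Finset.univ.filter fun i => y i ≠ x i, funext fun i => ?_⟩
    by_cases hi : y i = x i
    · simp [upd, hi]
    · simpa [upd, hi] using (h i).resolve_left hi

end

/-- A graph `Γ` on `𝔹^n` is the general asynchronous graph of some
Boolean network iff it is reflexive and all its out-neighbourhoods are subcubes. -/
theorem stmt0 (n : ℕ) (Γ : (Fin n → Bool) → (Fin n → Bool) → Prop) :
    (∃ f : (Fin n → Bool) → Fin n → Bool, ∀ x y, Γ x y ↔ GA f x y) ↔
      (Reflexive Γ ∧ ∀ x, IsSubcube {y | Γ x y}) := by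
  constructor
  · rintro ⟨f, hf⟩
    have hnbhd : ∀ x, {y | Γ x y} = interval x (f x) := fun x => by
      ext y
      exact (hf x y).trans (GA_iff_mem_interval f x y)
    refine ⟨fun x => ?_, fun x => hnbhd x ▸ isSubcube_interval x (f x)⟩
    show x ∈ {y | Γ x y}
    rw [hnbhd, mem_interval_iff]
    exact fun i => Or.inl rfl
  · rintro ⟨hrefl, hcube⟩
    refine ⟨fun x => opp {y | Γ x y} x, fun x y => ?_⟩
    rw [GA_iff_mem_interval, ← (hcube x).eq_interval_opp (hrefl x)]
    rfl
end

section
/- The operator f ↦ f^T is a closure operator on Boolean networks of dimension n with respect to the order ⊑: for all Boolean networks f, g of dimension n, (1) f ⊑ f^T; (2) if f ⊑ g then f^T ⊑ g^T; (3) (f^T)^T = f^T. -/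
/-! If `X` is a subcube containing `x`, then `y ∈ X` as soon as every coordinate in `Δ(x, y)`
is also flipped by some point of `X`. Hence `f ⊑ g` makes every trapspace of `g` one of `f`, and
`[x, f^T x] = T_f(x)` makes every trapspace of `f` one of `f^T`. So `f` and `f^T` have the same
trapspaces, whence `T_{f^T} = T_f` and `(f^T)^T = f^T`, while `f ⊑ g` gives `T_f(x) ⊆ T_g(x)`
and thus `f^T ⊑ g^T`. -/

section TrapClosure

variable {n : ℕ}

lemma IsSubcube.mem_of_delta {X : Set (Fin n → Bool)} (hX : IsSubcube X) {x y : Fin n → Bool}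
    (hx : x ∈ X) (hy : ∀ i ∈ delta x y, ∃ z ∈ X, z i ≠ x i) : y ∈ X := by
  obtain ⟨S, T, -, rfl⟩ := hX
  refine ⟨fun i hi => ?_, fun i hi => ?_⟩ <;> by_contra hyi
  · obtain ⟨z, hz, hzi⟩ := hy i (by simp_all [delta])
    exact hzi (by rw [hz.1 i hi, hx.1 i hi])
  · obtain ⟨z, hz, hzi⟩ := hy i (by simp_all [delta])
    exact hzi (by rw [hz.2 i hi, hx.2 i hi])

lemma IsTrapspace.of_BNle {f g : (Fin n → Bool) → Fin n → Bool} (hfg : BNle f g)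
    {X : Set (Fin n → Bool)} (hX : IsTrapspace g X) : IsTrapspace f X :=
  ⟨hX.1, fun x hx => hX.1.mem_of_delta hx fun _ hi => ⟨g x, hX.2 x hx, Ne.symm (hfg x hi)⟩⟩

lemma apply_mem_Tprin (f : (Fin n → Bool) → Fin n → Bool) (x : Fin n → Bool) :
    f x ∈ Tprin f x := fun _ hX => hX.1.2 x hX.2

lemma Tprin_subset {f : (Fin n → Bool) → Fin n → Bool} {x : Fin n → Bool}
    {X : Set (Fin n → Bool)} (hX : IsTrapspace f X) (hx : x ∈ X) : Tprin f x ⊆ X :=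
  Set.sInter_subset_of_mem ⟨hX, hx⟩

lemma Tprin_subset_of_BNle {f g : (Fin n → Bool) → Fin n → Bool} (hfg : BNle f g)
    (x : Fin n → Bool) : Tprin f x ⊆ Tprin g x :=
  Set.sInter_subset_sInter fun _ hX => ⟨hX.1.of_BNle hfg, hX.2⟩

lemma mem_delta_trapClosure (f : (Fin n → Bool) → Fin n → Bool) (x : Fin n → Bool) (i : Fin n) :
    i ∈ delta x (trapClosure f x) ↔ ∃ y ∈ Tprin f x, y i ≠ x i := by
  classical
  by_cases h : ∃ y ∈ Tprin f x, y i ≠ x i <;> simp [delta, trapClosure, opp, h]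

lemma le_trapClosure (f : (Fin n → Bool) → Fin n → Bool) : BNle f (trapClosure f) :=
  fun x i hi => (mem_delta_trapClosure f x i).2 ⟨f x, apply_mem_Tprin f x, Ne.symm hi⟩

lemma IsTrapspace.trapClosure {f : (Fin n → Bool) → Fin n → Bool} {X : Set (Fin n → Bool)}
    (hX : IsTrapspace f X) : IsTrapspace (trapClosure f) X :=
  ⟨hX.1, fun x hx => hX.1.mem_of_delta hx fun i hi => by
    obtain ⟨y, hy, hyi⟩ := (mem_delta_trapClosure f x i).1 hi
    exact ⟨y, Tprin_subset hX hx hy, hyi⟩⟩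

lemma isTrapspace_trapClosure_iff (f : (Fin n → Bool) → Fin n → Bool) (X : Set (Fin n → Bool)) :
    IsTrapspace (trapClosure f) X ↔ IsTrapspace f X :=
  ⟨IsTrapspace.of_BNle (le_trapClosure f), IsTrapspace.trapClosure⟩

lemma Tprin_trapClosure (f : (Fin n → Bool) → Fin n → Bool) : Tprin (trapClosure f) = Tprin f := by
  funext x
  simp only [Tprin, isTrapspace_trapClosure_iff]

lemma trapClosure_mono {f g : (Fin n → Bool) → Fin n → Bool} (hfg : BNle f g) :
    BNle (trapClosure f) (trapClosure g) := fun x i hi => by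
  obtain ⟨y, hy, hyi⟩ := (mem_delta_trapClosure f x i).1 hi
  exact (mem_delta_trapClosure g x i).2 ⟨y, Tprin_subset_of_BNle hfg x hy, hyi⟩

end TrapClosure

/-- the trapping closure is a closure operator for `⊑`. -/
theorem stmt1 (n : ℕ) (f g : (Fin n → Bool) → Fin n → Bool) :
    BNle f (trapClosure f) ∧
    (BNle f g → BNle (trapClosure f) (trapClosure g)) ∧
    trapClosure (trapClosure f) = trapClosure f := by
  refine ⟨le_trapClosure f, trapClosure_mono, ?_⟩
  funext x
  rw [trapClosure, Tprin_trapClosure]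
  rfl
end

section
/- A collection 𝒬 of subcubes of 𝔹^n is pre-principal (i.e. 𝒬 = {𝒬(x) : x ∈ 𝔹^n}) if and only if the following three conditions hold: (1) the union of all members of 𝒬 equals 𝔹^n; (2) for all A, B ∈ 𝒬 there exists 𝒞 ⊆ 𝒬 whose union equals A ∩ B; (3) for all A ∈ 𝒬 and all 𝒞 ⊆ 𝒬, if the union of 𝒞 equals A then A ∈ 𝒞. -/
/-! Whenever `𝒬(x) ∈ 𝒬`, it is the least member of `𝒬` containing `x`, and every `A ∈ 𝒬` is
the union of the `𝒬(x)` with `x ∈ A`; condition (3) then forces `A` to be one of them.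
Conversely, conditions (1) and (2) make a minimal member `C` of `𝒬` containing `x` the least
one: for `A ∈ 𝒬` containing `x`, the member of the cover of `C ∩ A` that contains `x` equals `C`
by minimality, so `C ⊆ A`. -/

section collAt

variable {n : ℕ} {𝒬 𝒞 : Set (Set (Fin n → Bool))} {A : Set (Fin n → Bool)} {x : Fin n → Bool}

lemma mem_collAt_self (𝒬 : Set (Set (Fin n → Bool))) (x : Fin n → Bool) : x ∈ collAt 𝒬 x :=
  fun _ hA => hA.2

lemma collAt_subset (hA : A ∈ 𝒬) (hx : x ∈ A) : collAt 𝒬 x ⊆ A :=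
  Set.sInter_subset_of_mem ⟨hA, hx⟩

lemma sUnion_image_collAt {S : Set (Fin n → Bool)} (hS : ∀ x ∈ S, collAt 𝒬 x ⊆ S) :
    ⋃₀ (collAt 𝒬 '' S) = S := by
  refine subset_antisymm ?_ fun y hy => ⟨_, ⟨y, hy, rfl⟩, mem_collAt_self 𝒬 y⟩
  rintro y ⟨_, ⟨x, hx, rfl⟩, hy⟩
  exact hS x hx hy

lemma collAt_mem_of_sUnion_eq (h𝒞 : 𝒞 ⊆ 𝒬) (hU : ⋃₀ 𝒞 = collAt 𝒬 x) : collAt 𝒬 x ∈ 𝒞 := by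
  obtain ⟨C, hC, hxC⟩ : x ∈ ⋃₀ 𝒞 := hU ▸ mem_collAt_self 𝒬 x
  have hCx : C = collAt 𝒬 x :=
    (hU ▸ Set.subset_sUnion_of_mem hC).antisymm (collAt_subset (h𝒞 hC) hxC)
  exact hCx ▸ hC

lemma collAt_mem (hcover : ⋃₀ 𝒬 = Set.univ)
    (hinter : ∀ A ∈ 𝒬, ∀ B ∈ 𝒬, ∃ 𝒞 ⊆ 𝒬, ⋃₀ 𝒞 = A ∩ B) (x : Fin n → Bool) :
    collAt 𝒬 x ∈ 𝒬 := by
  obtain ⟨C₀, hC₀, hxC₀⟩ : x ∈ ⋃₀ 𝒬 := hcover ▸ Set.mem_univ x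
  obtain ⟨C, hC⟩ := (Set.toFinite {A ∈ 𝒬 | x ∈ A}).exists_minimal ⟨C₀, hC₀, hxC₀⟩
  have hleast : IsLeast {A ∈ 𝒬 | x ∈ A} C := by
    refine ⟨hC.prop, fun A hA => ?_⟩
    obtain ⟨𝒞, h𝒞, hU⟩ := hinter C hC.prop.1 A hA.1
    obtain ⟨D, hD, hxD⟩ : x ∈ ⋃₀ 𝒞 := hU ▸ ⟨hC.prop.2, hA.2⟩
    have hDCA : D ⊆ C ∩ A := hU ▸ Set.subset_sUnion_of_mem hD
    have hDC : D = C := hC.eq_of_le ⟨h𝒞 hD, hxD⟩ (hDCA.trans Set.inter_subset_left)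
    exact hDC ▸ hDCA.trans Set.inter_subset_right
  have hCx : collAt 𝒬 x = C := hleast.isGLB.sInf_eq
  exact hCx ▸ hC.prop.1

lemma prePrincipal_iff :
    PrePrincipal 𝒬 ↔ (∀ x, collAt 𝒬 x ∈ 𝒬) ∧ ∀ A ∈ 𝒬, ∃ x, collAt 𝒬 x = A := by
  refine ⟨fun h => ⟨fun x => ?_, fun A hA => ?_⟩, fun ⟨hmem, hsurj⟩ => ?_⟩
  · exact (Set.ext_iff.mp h _).mpr ⟨x, rfl⟩
  · exact ((Set.ext_iff.mp h A).mp hA).imp fun _ => Eq.symm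
  · ext A
    exact ⟨fun hA => (hsurj A hA).imp fun _ => Eq.symm, by rintro ⟨x, rfl⟩; exact hmem x⟩

end collAt

theorem stmt4_general (n : ℕ) (𝒬 : Set (Set (Fin n → Bool))) :
    PrePrincipal 𝒬 ↔
      (⋃₀ 𝒬 = Set.univ ∧
       (∀ A ∈ 𝒬, ∀ B ∈ 𝒬, ∃ 𝒞 ⊆ 𝒬, ⋃₀ 𝒞 = A ∩ B) ∧
       (∀ A ∈ 𝒬, ∀ 𝒞 ⊆ 𝒬, ⋃₀ 𝒞 = A → A ∈ 𝒞)) := by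
  rw [prePrincipal_iff]
  constructor
  · rintro ⟨hmem, hsurj⟩
    refine ⟨Set.eq_univ_of_forall fun x => ⟨_, hmem x, mem_collAt_self 𝒬 x⟩,
      fun A hA B hB => ⟨collAt 𝒬 '' (A ∩ B), Set.image_subset_iff.2 fun x _ => hmem x, ?_⟩,
      fun A hA 𝒞 h𝒞 hU => ?_⟩
    · exact sUnion_image_collAt fun x hx =>
        Set.subset_inter (collAt_subset hA hx.1) (collAt_subset hB hx.2)
    · obtain ⟨x, rfl⟩ := hsurj A hA
      exact collAt_mem_of_sUnion_eq h𝒞 hU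
  · rintro ⟨hcover, hinter, hirred⟩
    have hmem := collAt_mem hcover hinter
    refine ⟨hmem, fun A hA => ?_⟩
    obtain ⟨x, -, hx⟩ := hirred A hA (collAt 𝒬 '' A) (Set.image_subset_iff.2 fun x _ => hmem x)
      (sUnion_image_collAt fun x hx => collAt_subset hA hx)
    exact ⟨x, hx⟩

/-- combinatorial characterisation of pre-principal collections. -/
theorem stmt4 (n : ℕ) (𝒬 : Set (Set (Fin n → Bool))) (h𝒬 : ∀ A ∈ 𝒬, IsSubcube A) :
    PrePrincipal 𝒬 ↔
      (⋃₀ 𝒬 = Set.univ ∧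
       (∀ A ∈ 𝒬, ∀ B ∈ 𝒬, ∃ 𝒞 ⊆ 𝒬, ⋃₀ 𝒞 = A ∩ B) ∧
       (∀ A ∈ 𝒬, ∀ 𝒞 ⊆ 𝒬, ⋃₀ 𝒞 = A → A ∈ 𝒞)) :=
  stmt4_general n 𝒬
end

section
/- Every commutative Boolean network is trapping. More precisely, for every Boolean network f of dimension n the following are equivalent: (1) f is commutative, i.e. f^{(i,j)} = f^{(j,i)} for all i, j ∈ [n]; (2) [y, f(x)] ⊆ [y, f(y)] ⊆ [x, f(x)] for all x ∈ 𝔹^n and all y ∈ [x, f(x)]; (3) f^{(S Δ T)} ⊑ f^{(S,T)} ⊑ f^{(S ∪ T)} for all S, T ⊆ [n]. -/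
/-! Commutativity says that updating a coordinate `i` does not change `f` at any other
coordinate. By induction, updating a whole set `S` leaves `f` unchanged outside `S`. Along the
subcube `[x, f(x)]` the network can therefore only change at coordinates that have already been
updated, which gives the inclusions of (2) and (3); (2) forces this stability back. Conversely,
for disjoint `S` and `T` we have `S Δ T = S ∪ T`, so (3) squeezes `f^{(S,T)}` to `f^{(S ∪ T)}`,
and `f^{(i,j)} = f^{({i,j})} = f^{(j,i)}`. -/

variable {n : ℕ}

lemma Bool.eq_of_ne_of_ne : ∀ {a b c : Bool}, a ≠ b → a ≠ c → b = c := by decide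

lemma Bool.eq_of_ne_iff_ne : ∀ {a b c : Bool}, (a ≠ b ↔ a ≠ c) → b = c := by decide

@[simp]
lemma mem_delta {x y : Fin n → Bool} {i : Fin n} : i ∈ delta x y ↔ x i ≠ y i := Iff.rfl

lemma eq_of_delta_eq {x y z : Fin n → Bool} (h : delta x y = delta x z) : y = z := by
  funext i
  exact Bool.eq_of_ne_iff_ne (Set.ext_iff.mp h i)

lemma delta_subset_union (x y z : Fin n → Bool) : delta x z ⊆ delta x y ∪ delta y z := by
  intro i hi
  by_contra h
  simp_all

lemma mem_interval_left (x y : Fin n → Bool) : x ∈ interval x y := by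
  simp [interval, delta]

lemma mem_interval_right (x y : Fin n → Bool) : y ∈ interval x y := fun _ h => h

lemma interval_subset_interval_iff {x y v w : Fin n → Bool} (hy : y ∈ interval x v) :
    interval y w ⊆ interval x v ↔ delta y w ⊆ delta x v := by
  refine ⟨fun h i hi => ?_, fun h z hz => (delta_subset_union x y z).trans
    (Set.union_subset hy (hz.trans h))⟩
  by_cases hxy : x i = y i
  · exact h (mem_interval_right y w) (by rwa [mem_delta, hxy])
  · exact hy hxy

lemma BNle.antisymm {f g : (Fin n → Bool) → Fin n → Bool} (hfg : BNle f g) (hgf : BNle g f) :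
    f = g :=
  funext fun x => eq_of_delta_eq ((hfg x).antisymm (hgf x))

section Updates

variable {f : (Fin n → Bool) → Fin n → Bool}

lemma upd_apply_of_mem {S : Finset (Fin n)} {i : Fin n} (x : Fin n → Bool) (hi : i ∈ S) :
    upd f S x i = f x i := if_pos hi

lemma upd_apply_of_not_mem {S : Finset (Fin n)} {i : Fin n} (x : Fin n → Bool) (hi : i ∉ S) :
    upd f S x i = x i := if_neg hi

lemma upd_empty (x : Fin n → Bool) : upd f ∅ x = x :=
  funext fun i => upd_apply_of_not_mem x (Finset.notMem_empty i)

lemma upd_mem_interval (S : Finset (Fin n)) (x : Fin n → Bool) : upd f S x ∈ interval x (f x) := by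
  intro i hi
  by_cases hiS : i ∈ S
  · rwa [mem_delta, upd_apply_of_mem x hiS] at hi
  · exact absurd (upd_apply_of_not_mem x hiS).symm hi

lemma upd_delta_eq_of_mem_interval {x y : Fin n → Bool} (hy : y ∈ interval x (f x)) :
    upd f {i | x i ≠ y i} x = y := by
  funext i
  by_cases hi : x i = y i
  · rw [upd_apply_of_not_mem x (by simpa using hi), hi]
  · rw [upd_apply_of_mem x (by simpa using hi)]
    exact Bool.eq_of_ne_of_ne (hy hi) hi

lemma ga_iff_mem_interval {x y : Fin n → Bool} : GA f x y ↔ y ∈ interval x (f x) :=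
  ⟨fun ⟨S, hS⟩ => hS ▸ upd_mem_interval S x,
    fun hy => ⟨_, (upd_delta_eq_of_mem_interval hy).symm⟩⟩

lemma isTrapping_iff :
    IsTrapping f ↔ ∀ x, ∀ y ∈ interval x (f x), interval y (f y) ⊆ interval x (f x) := by
  refine ⟨fun h x y hy z hz => ?_, fun h x y z hxy hyz => ?_⟩
  · exact ga_iff_mem_interval.1 (h (ga_iff_mem_interval.2 hy) (ga_iff_mem_interval.2 hz))
  · rw [ga_iff_mem_interval] at hxy hyz ⊢
    exact h x y hxy hyz

def IsUpdateStable (f : (Fin n → Bool) → Fin n → Bool) : Prop :=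
  ∀ (S : Finset (Fin n)) (x : Fin n → Bool), ∀ j ∉ S, f (upd f S x) j = f x j

lemma IsCommutative'.apply_upd_singleton (hc : IsCommutative' f) {i j : Fin n} (hij : j ≠ i)
    (x : Fin n → Bool) : f (upd f {i} x) j = f x j := by
  simpa [upd2, upd, hij] using congrFun (congrFun (hc i j) x) j

lemma IsCommutative'.isUpdateStable (hc : IsCommutative' f) : IsUpdateStable f := by
  intro S
  induction S using Finset.induction_on with
  | empty => intro x j _; rw [upd_empty]
  | insert i S hiS ih =>
    intro x j hj
    rw [Finset.mem_insert, not_or] at hj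
    have hsplit : upd f (insert i S) x = upd f {i} (upd f S x) := by
      funext k
      by_cases hki : k = i
      · subst hki
        simp [upd, ih x k hiS]
      · simp [upd, hki]
    rw [hsplit, hc.apply_upd_singleton hj.1, ih x j hj.2]

lemma IsUpdateStable.apply_eq_of_mem_interval (hf : IsUpdateStable f) {x y : Fin n → Bool}
    (hy : y ∈ interval x (f x)) {j : Fin n} (hj : x j = y j) : f y j = f x j := by
  rw [← upd_delta_eq_of_mem_interval hy]
  exact hf _ x j (by simpa using hj)

lemma IsUpdateStable.interval_subset (hf : IsUpdateStable f) {x y : Fin n → Bool}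
    (hy : y ∈ interval x (f x)) :
    interval y (f x) ⊆ interval y (f y) ∧ interval y (f y) ⊆ interval x (f x) := by
  rw [interval_subset_interval_iff (mem_interval_left y (f y)), interval_subset_interval_iff hy]
  constructor
  · intro j hj
    by_cases hxy : x j = y j
    · rwa [mem_delta, hf.apply_eq_of_mem_interval hy hxy]
    · exact absurd (Bool.eq_of_ne_of_ne (hy hxy) hxy).symm hj
  · intro j hj
    by_cases hxy : x j = y j
    · rwa [mem_delta, hxy, ← hf.apply_eq_of_mem_interval hy hxy]
    · exact hy hxy

lemma isUpdateStable_of_interval_subset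
    (h : ∀ x, ∀ y ∈ interval x (f x),
      interval y (f x) ⊆ interval y (f y) ∧ interval y (f y) ⊆ interval x (f x)) :
    IsUpdateStable f := by
  intro S x j hj
  have hy := upd_mem_interval (f := f) S x
  have hxy : upd f S x j = x j := upd_apply_of_not_mem x hj
  obtain ⟨h1, h2⟩ := h x _ hy
  rw [interval_subset_interval_iff (mem_interval_left _ _)] at h1
  rw [interval_subset_interval_iff hy] at h2
  by_cases hfx : x j = f x j
  · by_contra hne
    exact h2 (show upd f S x j ≠ f (upd f S x) j by rw [hxy, hfx]; exact Ne.symm hne) hfx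
  · exact Bool.eq_of_ne_of_ne (h1 (by rwa [mem_delta, hxy])) (by rwa [hxy])

lemma IsUpdateStable.bnle (hf : IsUpdateStable f) (S T : Finset (Fin n)) :
    BNle (upd f (symmDiff S T)) (upd2 f S T) ∧ BNle (upd2 f S T) (upd f (S ∪ T)) := by
  have key (x : Fin n → Bool) (i : Fin n) : x i = upd f S x i → f (upd f S x) i = f x i :=
    hf.apply_eq_of_mem_interval (upd_mem_interval S x)
  refine ⟨fun x i hi => ?_, fun x i hi => ?_⟩ <;> have hkey := key x i <;>
    simp only [mem_delta, upd2, upd, Function.comp_apply, Finset.mem_symmDiff,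
      Finset.mem_union] at hi hkey ⊢ <;>
    grind

lemma upd2_eq_upd_union_of_disjoint
    (hsq : ∀ S T : Finset (Fin n),
      BNle (upd f (symmDiff S T)) (upd2 f S T) ∧ BNle (upd2 f S T) (upd f (S ∪ T)))
    {S T : Finset (Fin n)} (hST : Disjoint S T) :
    upd2 f S T = upd f (S ∪ T) :=
  BNle.antisymm (hsq S T).2 (by simpa [hST.symmDiff_eq_sup] using (hsq S T).1)

lemma isCommutative'_of_bnle
    (hsq : ∀ S T : Finset (Fin n),
      BNle (upd f (symmDiff S T)) (upd2 f S T) ∧ BNle (upd2 f S T) (upd f (S ∪ T))) :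
    IsCommutative' f := by
  intro i j
  by_cases hij : i = j
  · rw [hij]
  have hd : Disjoint ({i} : Finset (Fin n)) {j} := Finset.disjoint_singleton.2 hij
  rw [upd2_eq_upd_union_of_disjoint hsq hd, upd2_eq_upd_union_of_disjoint hsq hd.symm,
    Finset.union_comm]

end Updates

/-- commutative networks are trapping; alternate definitions. -/
theorem stmt11 (n : ℕ) (f : (Fin n → Bool) → Fin n → Bool) :
    (IsCommutative' f → IsTrapping f) ∧
    List.TFAE [
      IsCommutative' f,
      ∀ x : Fin n → Bool, ∀ y ∈ interval x (f x),
        interval y (f x) ⊆ interval y (f y) ∧ interval y (f y) ⊆ interval x (f x),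
      ∀ S T : Finset (Fin n),
        BNle (upd f (symmDiff S T)) (upd2 f S T) ∧ BNle (upd2 f S T) (upd f (S ∪ T))
    ] := by
  refine ⟨fun hc => isTrapping_iff.2 fun x y hy =>
    (hc.isUpdateStable.interval_subset hy).2, ?_⟩
  tfae_have 1 → 2 := fun hc x y hy => hc.isUpdateStable.interval_subset hy
  tfae_have 2 → 3 := fun h => (isUpdateStable_of_interval_subset h).bnle
  tfae_have 3 → 1 := isCommutative'_of_bnle
  tfae_finish
end

section
/- Let f be a commutative Boolean network of dimension n, and for z ∈ 𝔹^n write δ_z = d_H(z, f(z)). Then for every x ∈ 𝔹^n and every y ∈ [x, f(x)]: d_H(x,y) ≥ δ_x − δ_y ≥ 0, and d_H(x,y) = δ_x − δ_y if and only if f(y) = f(x). -/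
/-!
Commutativity says that updating coordinate `i` never changes `f _ j` for `j ≠ i`; iterating,
`f (f^{(S)} x)` agrees with `f x` outside `S`. Every `y ∈ [x, f(x)]` is `f^{(S)} x` for
`S = Δ(x,y)`, so `Δ(f x, f y) ⊆ Δ(x,y)`, and a coordinatewise count gives
`δ_y + d_H(x,y) = δ_x + d_H(f x, f y)`. Both inequalities and the equality case follow since
`0 ≤ d_H(f x, f y) ≤ d_H(x,y)`.
-/

section Hamming

variable {n : ℕ}

lemma hdist_eq_sum (x y : Fin n → Bool) :
    hdist x y = ∑ i, if x i ≠ y i then 1 else 0 := by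
  have h : delta x y = ↑(Finset.univ.filter fun i => x i ≠ y i) := by
    ext i; simp [delta]
  rw [hdist, h, Set.ncard_coe_finset, Finset.card_filter]

lemma hdist_le_of_delta_subset {x y z w : Fin n → Bool} (h : delta x y ⊆ delta z w) :
    hdist x y ≤ hdist z w :=
  Set.ncard_le_ncard h (Set.toFinite _)

lemma hdist_eq_zero_iff {x y : Fin n → Bool} : hdist x y = 0 ↔ x = y := by
  rw [hdist, Set.ncard_eq_zero (Set.toFinite _), Set.eq_empty_iff_forall_notMem, funext_iff]
  simp [delta]

/-- It holds coordinatewise: `[y ≠ b] + [x ≠ y] = [x ≠ a] + [a ≠ b]`. -/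
lemma hdist_add_hdist_of_delta {x y a b : Fin n → Bool}
    (hy : ∀ i, x i ≠ y i → x i ≠ a i) (hb : ∀ i, x i = y i → a i = b i) :
    hdist y b + hdist x y = hdist x a + hdist a b := by
  simp only [hdist_eq_sum, ← Finset.sum_add_distrib]
  refine Finset.sum_congr rfl fun i _ => ?_
  have hyi := hy i
  have hbi := hb i
  revert hyi hbi
  cases x i <;> cases y i <;> cases a i <;> cases b i <;> simp

end Hamming

namespace IsCommutative'

variable {n : ℕ} {f : (Fin n → Bool) → Fin n → Bool}

lemma apply_upd_singleton_of_ne (hf : IsCommutative' f) (x : Fin n → Bool) {i j : Fin n}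
    (hij : j ≠ i) : f (upd f {i} x) j = f x j := by
  simpa [upd2, upd, hij] using congrFun (congrFun (hf i j) x) j

lemma apply_upd_of_notMem (hf : IsCommutative' f) (x : Fin n → Bool) (S : Finset (Fin n)) :
    ∀ j ∉ S, f (upd f S x) j = f x j := by
  induction S using Finset.induction_on with
  | empty =>
    intro j _
    rw [show upd f ∅ x = x from funext fun i => if_neg (Finset.notMem_empty i)]
  | insert i S hiS ih =>
    have hstep : upd f (insert i S) x = upd f {i} (upd f S x) := by
      funext j
      by_cases hji : j = i
      · subst hji; simp [upd, ih j hiS]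
      · simp [upd, hji]
    intro j hj
    rw [Finset.mem_insert, not_or] at hj
    rw [hstep, hf.apply_upd_singleton_of_ne _ hj.1, ih j hj.2]

lemma apply_eq_of_mem_interval (hf : IsCommutative' f) {x y : Fin n → Bool}
    (hy : y ∈ interval x (f x)) {j : Fin n} (hj : x j = y j) : f x j = f y j := by
  set S := Finset.univ.filter fun i => x i ≠ y i
  have hyS : y = upd f S x := by
    funext i
    by_cases hi : x i = y i
    · simp [S, upd, hi]
    · have hfi : x i ≠ f x i := hy hi
      simp only [upd, S, Finset.mem_filter, Finset.mem_univ, true_and, if_pos hi]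
      revert hi hfi; cases x i <;> cases y i <;> cases f x i <;> simp
  rw [hyS, hf.apply_upd_of_notMem x S j (by simp [S, hj])]

end IsCommutative'

/-- for a commutative network, with `δ_z = d_H(z, f(z))`, one has
`d_H(x,y) ≥ δ_x − δ_y ≥ 0` for `y ∈ [x, f(x)]`, with equality iff `f(y) = f(x)`. -/
theorem stmt12 (n : ℕ) (f : (Fin n → Bool) → Fin n → Bool)
    (hf : IsCommutative' f) (x y : Fin n → Bool) (hy : y ∈ interval x (f x)) :
    (hdist x y : ℤ) ≥ (hdist x (f x) : ℤ) - (hdist y (f y) : ℤ) ∧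
    (0 : ℤ) ≤ (hdist x (f x) : ℤ) - (hdist y (f y) : ℤ) ∧
    ((hdist x y : ℤ) = (hdist x (f x) : ℤ) - (hdist y (f y) : ℤ) ↔ f y = f x) := by
  have himage : delta (f x) (f y) ⊆ delta x y := fun j hj hxy =>
    hj (hf.apply_eq_of_mem_interval hy hxy)
  have hcount : hdist y (f y) + hdist x y = hdist x (f x) + hdist (f x) (f y) :=
    hdist_add_hdist_of_delta (fun i hi => hy hi)
      (fun i hi => hf.apply_eq_of_mem_interval hy hi)
  have hle := hdist_le_of_delta_subset himage
  have hzero : hdist (f x) (f y) = 0 ↔ f y = f x := hdist_eq_zero_iff.trans eq_comm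
  refine ⟨by omega, by omega, ?_⟩
  rw [← hzero]
  omega
end
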